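/- Combining upper and lower bounds: the maximum overhang S*(w) achievable by balanced loaded spinal stacks of weight w satisfies ln w − 1.313 < S*(w) < ln w + 1 for all w ≥ 2; hence S*(w) = ln w + Θ(1). -/

import Mathlib

open Real Finset

/-! ### Auxiliary lemmas -/

lemma neglog_ub {x : ℝ} (h0 : 0 ≤ x) (h3 : x ≤ 1/3) :
    -Real.log (1 - x) ≤ x + x^2/2 + x^3/3 + x^4/4 + x^5/(1-x) := by
  have h : |x| < 1 := by rw [abs_of_nonneg h0]; linarith
  have := Real.abs_log_sub_add_sum_range_le h 4
  rw [abs_of_nonneg h0] at this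
  have hsum : (∑ i ∈ range 4, x ^ (i + 1) / (i + 1)) = x + x^2/2 + x^3/3 + x^4/4 := by
    simp [Finset.sum_range_succ]; ring
  rw [hsum] at this
  have := abs_le.1 this
  linarith [this.1, this.2]

lemma log32 : Real.log (3/2) ≤ 0.406 := by
  rw [Real.log_le_iff_le_exp (by norm_num)]
  calc (3/2 : ℝ) ≤ ∑ i ∈ range 6, (0.406:ℝ) ^ i / (i).factorial := by
        simp [Finset.sum_range_succ, Nat.factorial]; norm_num
    _ ≤ Real.exp 0.406 := Real.sum_le_exp_of_nonneg (by norm_num) 6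

lemma log54 : Real.log (5/4) ≤ 0.224 := by
  rw [Real.log_le_iff_le_exp (by norm_num)]
  calc (5/4 : ℝ) ≤ ∑ i ∈ range 5, (0.224:ℝ) ^ i / (i).factorial := by
        simp [Finset.sum_range_succ, Nat.factorial]; norm_num
    _ ≤ Real.exp 0.224 := Real.sum_le_exp_of_nonneg (by norm_num) 5

/-- Middle-step loss lemma. -/
lemma middle_step {σ : ℝ} (hσ : 3/2 ≤ σ) :
    2*Real.log σ - 2*Real.log (σ - 1/2) - (13/12)/(σ^2 - 1/16)
      ≤ 1 - ((σ-1/2)^2 + 1/2)/σ^2 := by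
  set x : ℝ := 1/(2*σ) with hxdef
  have hσ0 : (0:ℝ) < σ := by linarith
  have hx0 : 0 < x := by positivity
  have hx3 : x ≤ 1/3 := by
    rw [hxdef, div_le_div_iff₀ (by linarith) (by norm_num)]; linarith
  have hσx : σ = 1/(2*x) := by rw [hxdef]; field_simp
  have hlog : Real.log σ - Real.log (σ - 1/2) = -Real.log (1 - x) := by
    have h1 : (1 : ℝ) - x = (σ - 1/2)/σ := by
      rw [hxdef]; field_simp
    rw [h1, Real.log_div (by linarith) (by linarith)]
    ring
  have hub := neglog_ub hx0.le hx3
  have key : 2*(x + x^2/2 + x^3/3 + x^4/4 + x^5/(1-x)) - (13/12)/(σ^2 - 1/16)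
      ≤ 1 - ((σ-1/2)^2 + 1/2)/σ^2 := by
    rw [hσx]
    have h1x : (0:ℝ) < 1 - x := by linarith
    have h4x : (0:ℝ) < 4 - x^2 := by nlinarith
    have e1 : ((1:ℝ)/(2*x))^2 - 1/16 = (4 - x^2)/(16*x^2) := by field_simp; ring
    rw [e1, ← sub_nonneg]
    have key2 : (1 - ((1/(2*x) - 1/2)^2 + 1/2)/(1/(2*x))^2) -
        (2*(x + x^2/2 + x^3/3 + x^4/4 + x^5/(1-x)) - (13/12)/((4-x^2)/(16*x^2)))
        = x^2 * ((52/3)*(1-x) - ((4 + (2/3)*x + (1/2)*x^2)*(1-x)*(4-x^2) + 2*x^3*(4-x^2)))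
          / ((1-x)*(4-x^2)) := by
      field_simp
      ring
    rw [key2]
    have hnum : (0:ℝ) ≤ (52/3)*(1-x) - ((4 + (2/3)*x + (1/2)*x^2)*(1-x)*(4-x^2) + 2*x^3*(4-x^2)) := by
      have h13 : (0:ℝ) ≤ 1/3 - x := by linarith
      nlinarith [mul_nonneg (mul_nonneg hx0.le hx0.le) h13,
        mul_nonneg (mul_nonneg (mul_nonneg hx0.le hx0.le) hx0.le) h13,
        mul_nonneg (mul_nonneg (mul_nonneg (mul_nonneg hx0.le hx0.le) hx0.le) hx0.le) h13,
        mul_nonneg hx0.le h13, sq_nonneg x]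
    positivity
  calc 2*Real.log σ - 2*Real.log (σ - 1/2) - (13/12)/(σ^2 - 1/16)
      = 2*(Real.log σ - Real.log (σ - 1/2)) - (13/12)/(σ^2 - 1/16) := by ring
    _ = 2*(-Real.log (1-x)) - (13/12)/(σ^2 - 1/16) := by rw [hlog]
    _ ≤ 2*(x + x^2/2 + x^3/3 + x^4/4 + x^5/(1-x)) - (13/12)/(σ^2 - 1/16) := by linarith
    _ ≤ _ := key

/-- Endpoint lemma: budget bound at the first stone. -/
lemma endpoint {σ : ℝ} (h1 : 1 ≤ σ) (h2 : σ ≤ 3/2) :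
    2*Real.log σ + 1/(2*σ^2) + (13/6)/(σ + 1/4) < 2.313 := by
  have hσ0 : (0:ℝ) < σ := by linarith
  rcases le_total σ (5/4) with hc | hc
  · -- σ ∈ [1, 5/4]
    have hlog : Real.log σ ≤ 0.224 + (4/5)*σ - 1 := by
      have h := Real.log_le_sub_one_of_pos (show (0:ℝ) < σ/(5/4) by positivity)
      rw [Real.log_div (by linarith) (by norm_num)] at h
      have := log54
      linarith
    have hA : 1/(2*σ^2) ≤ 1/2 - (18/25)*(σ-1) := by
      rw [div_le_iff₀ (by positivity)]
      nlinarith [mul_nonneg (sub_nonneg.2 h1) (sub_nonneg.2 hc)]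
    have hB : (13/6)/(σ + 1/4) ≤ 26/15 - (52/45)*(σ-1) := by
      rw [div_le_iff₀ (by positivity)]
      nlinarith [mul_nonneg (sub_nonneg.2 h1) (sub_nonneg.2 hc)]
    nlinarith
  · -- σ ∈ [5/4, 3/2]
    have hlog : Real.log σ ≤ 0.406 + (2/3)*σ - 1 := by
      have h := Real.log_le_sub_one_of_pos (show (0:ℝ) < σ/(3/2) by positivity)
      rw [Real.log_div (by linarith) (by norm_num)] at h
      have := log32
      linarith
    have hA : 1/(2*σ^2) ≤ 8/25 - (88/225)*(σ-5/4) := by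
      rw [div_le_iff₀ (by positivity)]
      nlinarith [mul_nonneg (sub_nonneg.2 hc) (sub_nonneg.2 h2)]
    have hB : (13/6)/(σ + 1/4) ≤ 13/9 - (52/63)*(σ-5/4) := by
      rw [div_le_iff₀ (by positivity)]
      nlinarith [mul_nonneg (sub_nonneg.2 hc) (sub_nonneg.2 h2)]
    nlinarith

lemma telescope_Icc (f : ℕ → ℝ) : ∀ k : ℕ, 1 ≤ k →
    ∑ i ∈ Finset.Icc 2 k, (f i - f (i-1)) = f k - f 1 := by
  intro k
  induction k with
  | zero => omega
  | succ n ih =>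
    intro _
    rcases Nat.lt_or_ge n 1 with hn | hn
    · interval_cases n
      simp
    · rw [Finset.sum_Icc_succ_top (by omega : 2 ≤ n + 1), ih hn]
      simp

lemma icc_split (k : ℕ) (hk : 1 ≤ k) :
    Finset.Icc 1 k = insert 1 (Finset.Icc 2 k) := by
  ext i; simp; omega


/-- `spinalOverhang w` is the supremum of overhangs of balanced loaded spinal
stacks of total weight `w`: the supremum over `k` and cumulative load sequences
`0 = t 0 < t 1 < ⋯ < t k = w` with `t i - t (i-1) ≥ 1` of
`∑_{i=1}^k (1 - (t (i-1) + 1/2) / t i)`. -/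
noncomputable def spinalOverhang (w : ℝ) : ℝ :=
  sSup {o : ℝ | ∃ (k : ℕ) (t : ℕ → ℝ), t 0 = 0 ∧
    (∀ i, 1 ≤ i → i ≤ k → 1 ≤ t i - t (i - 1)) ∧ t k = w ∧
    o = ∑ i ∈ Finset.Icc 1 k, (1 - (t (i - 1) + 1 / 2) / t i)}

/-- Every element of the overhang set is at most `log w + 1 - 1/(2w)`. -/
lemma overhang_mem_le {w : ℝ} (hw : 2 ≤ w) {o : ℝ}
    (ho : o ∈ {o : ℝ | ∃ (k : ℕ) (t : ℕ → ℝ), t 0 = 0 ∧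
      (∀ i, 1 ≤ i → i ≤ k → 1 ≤ t i - t (i - 1)) ∧ t k = w ∧
      o = ∑ i ∈ Finset.Icc 1 k, (1 - (t (i - 1) + 1 / 2) / t i)}) :
    o ≤ Real.log w + 1 - 1/(2*w) := by
  obtain ⟨k, t, h0, hstep, hkw, hsum⟩ := ho
  have hk1 : 1 ≤ k := by
    by_contra h
    have : k = 0 := by omega
    rw [this, h0] at hkw; linarith
  -- monotonicity
  have hmono : ∀ a b : ℕ, 1 ≤ a → a ≤ b → b ≤ k → t a ≤ t b := by
    intro a b ha hab
    induction b, hab using Nat.le_induction with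
    | base => intro _; exact le_rfl
    | succ n hn ih =>
      intro hk'
      have h1' : 1 ≤ t (n+1) - t n := by
        have := hstep (n+1) (by omega) hk'
        simpa using this
      have h2 := ih (by omega)
      linarith
  have ht1 : 1 ≤ t 1 := by
    have := hstep 1 le_rfl hk1; rw [h0] at this; simpa using this
  have ht1w : t 1 ≤ w := by rw [← hkw]; exact hmono 1 k le_rfl hk1 le_rfl
  have hw0 : (0:ℝ) < w := by linarith
  have htpos : ∀ i, 1 ≤ i → i ≤ k → (1:ℝ) ≤ t i := fun i hi hik =>
    le_trans ht1 (hmono 1 i le_rfl hi hik)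
  rw [hsum, icc_split k hk1, Finset.sum_insert (by simp)]
  have hfirst : 1 - (t (1-1) + 1/2)/ t 1 ≤ 1 - 1/(2*w) := by
    simp only [Nat.sub_self, h0]
    have ht10 : (0:ℝ) < t 1 := by linarith
    have : 1/(2*w) ≤ (0 + 1/2)/t 1 := by
      rw [div_le_div_iff₀ (by linarith) ht10]; linarith
    linarith
  have hrest : ∑ i ∈ Finset.Icc 2 k, (1 - (t (i-1) + 1/2)/t i)
      ≤ ∑ i ∈ Finset.Icc 2 k, (Real.log (t i) - Real.log (t (i-1))) := by
    apply Finset.sum_le_sum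
    intro i hi
    simp only [Finset.mem_Icc] at hi
    have hi1 : 1 ≤ i - 1 := by omega
    have hik : i - 1 ≤ k := by omega
    have ha : (1:ℝ) ≤ t (i-1) := htpos _ hi1 hik
    have hb : (1:ℝ) ≤ t i := htpos _ (by omega) hi.2
    have hab : t (i-1) ≤ t i := hmono (i-1) i hi1 (by omega) hi.2
    have h := Real.log_le_sub_one_of_pos (show (0:ℝ) < t (i-1) / t i by positivity)
    rw [Real.log_div (by linarith) (by linarith)] at h
    have hhalf : (0:ℝ) < (1/2)/t i := by positivity
    have : (t (i-1) + 1/2)/t i = t (i-1)/t i + (1/2)/t i := by ring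
    rw [this]
    linarith
  have htel : ∑ i ∈ Finset.Icc 2 k, (Real.log (t i) - Real.log (t (i-1)))
      = Real.log (t k) - Real.log (t 1) := telescope_Icc _ k hk1
  have hlt1 : 0 ≤ Real.log (t 1) := Real.log_nonneg ht1
  rw [htel, hkw] at hrest
  linarith

/-- The maximum overhang achievable by balanced loaded spinal stacks of weight
`w` satisfies `ln w - 1.313 < S*(w) < ln w + 1` for all `w ≥ 2`; hence
`S*(w) = ln w + Θ(1)`. -/
theorem spinal_overhang_theta (w : ℝ) (hw : 2 ≤ w) :
    Real.log w - 1.313 < spinalOverhang w ∧ spinalOverhang w < Real.log w + 1 := by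
  have hw0 : (0:ℝ) < w := by linarith
  set S := {o : ℝ | ∃ (k : ℕ) (t : ℕ → ℝ), t 0 = 0 ∧
      (∀ i, 1 ≤ i → i ≤ k → 1 ≤ t i - t (i - 1)) ∧ t k = w ∧
      o = ∑ i ∈ Finset.Icc 1 k, (1 - (t (i - 1) + 1 / 2) / t i)} with hS
  have hbdd : BddAbove S := ⟨Real.log w + 1 - 1/(2*w), fun o ho => overhang_mem_le hw ho⟩
  -- the construction
  set r := Real.sqrt w with hr
  have hr2 : r^2 = w := Real.sq_sqrt (by linarith)
  have hr1 : (1:ℝ) < r := by nlinarith [Real.sqrt_nonneg w]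
  have hceil3 : 3 ≤ ⌈2*r⌉₊ := by
    have : (2:ℝ) < 2*r := by linarith
    exact Nat.lt_ceil.2 this
  set k := ⌈2*r⌉₊ - 2 with hkdef
  have hk1 : 1 ≤ k := by omega
  have hkcast : (k:ℝ) = (⌈2*r⌉₊ : ℝ) - 2 := by
    rw [hkdef, Nat.cast_sub (by omega)]; norm_num
  have hcub : (⌈2*r⌉₊ : ℝ) < 2*r + 1 := Nat.ceil_lt_add_one (by positivity)
  have hclb : 2*r ≤ (⌈2*r⌉₊ : ℝ) := Nat.le_ceil _
  set s : ℕ → ℝ := fun i => r - ((k:ℝ) - (i:ℝ))/2 with hsdef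
  have hs1lb : 1 ≤ s 1 := by
    simp only [hsdef, Nat.cast_one]
    have : (k:ℝ) ≤ 2*r - 1 := by rw [hkcast]; linarith
    linarith
  have hs1ub : s 1 ≤ 3/2 := by
    simp only [hsdef, Nat.cast_one]
    have : 2*r - 2 ≤ (k:ℝ) := by rw [hkcast]; linarith
    linarith
  have hsk : s k = r := by simp [hsdef]
  have hs_arith : ∀ i : ℕ, s i = s 1 + ((i:ℝ) - 1)/2 := by
    intro i; simp [hsdef]; ring
  clear_value s
  set t : ℕ → ℝ := fun i => if i = 0 then 0 else (s i)^2 with htdef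
  have ht0 : t 0 = 0 := by simp [htdef]
  have htpos : ∀ i : ℕ, 1 ≤ i → t i = (s i)^2 := by
    intro i hi; simp only [htdef]; rw [if_neg (by omega)]
  clear_value t
  have hsub : ∀ i : ℕ, 2 ≤ i → s (i-1) = s i - 1/2 := by
    intro i hi
    rw [hs_arith (i-1), hs_arith i]
    have hc : ((i-1 : ℕ):ℝ) = (i:ℝ) - 1 := by
      rw [Nat.cast_sub (by omega : 1 ≤ i)]; norm_num
    rw [hc]; ring
  have hsge : ∀ i : ℕ, 2 ≤ i → 3/2 ≤ s i := by
    intro i hi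
    rw [hs_arith i]
    have : (2:ℝ) ≤ (i:ℝ) := by exact_mod_cast hi
    linarith
  have hsteps : ∀ i, 1 ≤ i → i ≤ k → 1 ≤ t i - t (i - 1) := by
    intro i hi hik
    rcases eq_or_lt_of_le hi with h1 | h2
    · subst h1
      have h11 : (1:ℕ) - 1 = 0 := rfl
      rw [htpos 1 le_rfl, h11, ht0]
      nlinarith [hs1lb, sq_nonneg (s 1 - 1)]
    · have hi2 : 2 ≤ i := h2
      rw [htpos i (by omega), htpos (i-1) (by omega), hsub i hi2]
      have := hsge i hi2
      nlinarith
  have htk : t k = w := by rw [htpos k hk1, hsk, hr2]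
  have hmem : (∑ i ∈ Finset.Icc 1 k, (1 - (t (i - 1) + 1 / 2) / t i)) ∈ S :=
    ⟨k, t, ht0, hsteps, htk, rfl⟩
  -- lower bound for the constructed overhang
  set ψ : ℕ → ℝ := fun j => 2*Real.log (s j) + (13/6)/(s j + 1/4) with hψ
  have hψapp : ∀ j, ψ j = 2*Real.log (s j) + (13/6)/(s j + 1/4) := fun j => rfl
  clear_value ψ
  have hmid : ∀ i ∈ Finset.Icc 2 k, ψ i - ψ (i-1) ≤ 1 - (t (i-1) + 1/2)/t i := by
    intro i hi
    simp only [Finset.mem_Icc] at hi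
    have hσ := hsge i hi.1
    have hs' := hsub i hi.1
    rw [htpos i (by omega), htpos (i-1) (by omega), hs']
    have key := middle_step hσ
    have hident : ψ i - ψ (i-1) = 2*Real.log (s i) - 2*Real.log (s i - 1/2)
        - (13/12)/((s i)^2 - 1/16) := by
      rw [hψapp i, hψapp (i-1), hs']
      have h1 : s i + 1/4 ≠ 0 := by linarith
      have h2 : s i - 1/4 ≠ 0 := by linarith
      have e0 : s i - 1/2 + 1/4 = s i - 1/4 := by ring
      have e4 : (s i)^2 - 1/16 = (s i - 1/4) * (s i + 1/4) := by ring
      rw [e0]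
      have hdiv : (13:ℝ)/6/(s i + 1/4) - 13/6/(s i - 1/4) = -(13/12/((s i)^2 - 1/16)) := by
        rw [div_sub_div _ _ h1 h2,
          show (13:ℝ)/6*(s i - 1/4) - (s i + 1/4)*(13/6) = -(13/12) by ring,
          show (s i)^2 - 1/16 = (s i + 1/4)*(s i - 1/4) by ring, neg_div]
      linarith [hdiv]
    rw [hident]
    exact key
  have hψtel : ∑ i ∈ Finset.Icc 2 k, (ψ i - ψ (i-1)) = ψ k - ψ 1 := telescope_Icc ψ k hk1
  have hsum_lb : ψ k - ψ 1 + (1 - (t 0 + 1/2)/t 1)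
      ≤ ∑ i ∈ Finset.Icc 1 k, (1 - (t (i-1) + 1/2)/t i) := by
    rw [icc_split k hk1, Finset.sum_insert (by simp)]
    have h2 := Finset.sum_le_sum hmid
    rw [hψtel] at h2
    have h1 : (1:ℕ) - 1 = 0 := rfl
    rw [h1]
    linarith
  have hψk : Real.log w ≤ ψ k := by
    rw [hψapp k, hsk]
    have hlw : Real.log w = 2 * Real.log r := by
      rw [hr, Real.log_sqrt (by linarith)]; ring
    have hpos : 0 ≤ (13/6)/(r + 1/4) := by positivity
    linarith
  have hfirst : (1 - (t 0 + 1/2)/t 1) = 1 - 1/(2*(s 1)^2) := by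
    rw [ht0, htpos 1 le_rfl]
    have : (s 1)^2 ≠ 0 := by positivity
    field_simp
    ring
  have hend := endpoint hs1lb hs1ub
  have hψ1 : ψ 1 = 2*Real.log (s 1) + (13/6)/(s 1 + 1/4) := hψapp 1
  have hlb : Real.log w - 1.313 < ∑ i ∈ Finset.Icc 1 k, (1 - (t (i-1) + 1/2)/t i) := by
    rw [hfirst] at hsum_lb
    rw [hψ1] at hsum_lb
    linarith
  have hSO : spinalOverhang w = sSup S := by rw [hS]; rfl
  constructor
  · have : (∑ i ∈ Finset.Icc 1 k, (1 - (t (i-1) + 1/2)/t i)) ≤ sSup S :=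
      le_csSup hbdd hmem
    rw [hSO]
    linarith
  · have hne : S.Nonempty := ⟨_, hmem⟩
    have hle : sSup S ≤ Real.log w + 1 - 1/(2*w) :=
      csSup_le hne (fun o ho => overhang_mem_le hw ho)
    have hpos : (0:ℝ) < 1/(2*w) := by positivity
    rw [hSO]
    linarith
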